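/- Let H = P·S be a rank factorization of a rank-r matrix H, and suppose H also admits a rank factorization H = P'·S' where every row of P' is a standard basis vector of ℝʳ. Then every row of P equals one of the rows of the matrix B satisfying P = P'·B, and consequently B can be assembled by vertically stacking r linearly independent rows of P; moreover P·B⁻¹ = P' has all rows equal to standard basis vectors. -/

import Mathlib

/-!
From `P * S = P' * S'` and a right inverse `T` of `S` (which exists because `S` has full row
rank) we get `P = P' * B` with `B = S' * T`. Since `P` has rank `r` and factors through the
`r × r` matrix `B`, this `B` is invertible. A row of `P'` equal to `e_j` selects the row `j`
of `B`, so every row of `P` is a row of `B`, and `P * B⁻¹ = P'`.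
-/

namespace Matrix

section Field

variable {K : Type*} [Field K] {m n : Type*} [Fintype m] [Fintype n]

theorem mulVec_surjective_of_rank_eq_card {A : Matrix m n K} (h : A.rank = Fintype.card m) :
    Function.Surjective A.mulVec := by
  have hrange : LinearMap.range A.mulVecLin = ⊤ :=
    Submodule.eq_top_of_finrank_eq (h.trans (Module.finrank_fintype_fun_eq_card K).symm)
  exact LinearMap.range_eq_top.mp hrange

theorem exists_mul_eq_one_of_rank_eq_card [DecidableEq m] {A : Matrix m n K}
    (h : A.rank = Fintype.card m) : ∃ T : Matrix n m K, A * T = 1 :=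
  mulVec_surjective_iff_exists_right_inverse.mp (mulVec_surjective_of_rank_eq_card h)

theorem isUnit_det_of_rank_eq_card [DecidableEq n] {A : Matrix n n K}
    (h : A.rank = Fintype.card n) : IsUnit A.det := by
  rw [← isUnit_iff_isUnit_det, ← mulVec_surjective_iff_isUnit]
  exact mulVec_surjective_of_rank_eq_card h

theorem isUnit_det_of_rank_mul_eq_card {l : Type*} [DecidableEq n] (A : Matrix l n K)
    (B : Matrix n n K) (h : (A * B).rank = Fintype.card n) : IsUnit B.det :=
  isUnit_det_of_rank_eq_card <|
    le_antisymm B.rank_le_card_width (h ▸ rank_mul_le_right A B)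

end Field

theorem eq_mul_mul_of_mul_eq_mul {R : Type*} [Semiring R] {l m n : Type*} [Fintype m]
    [Fintype n] [DecidableEq m] {P P' : Matrix l m R} {S S' : Matrix m n R} {T : Matrix n m R}
    (h : P * S = P' * S') (hT : S * T = 1) : P = P' * (S' * T) := by
  rw [← Matrix.mul_assoc, ← h, Matrix.mul_assoc, hT, Matrix.mul_one]

theorem mul_row_eq_of_row_eq_single {R : Type*} [NonAssocSemiring R] {l m n : Type*}
    [Fintype m] [DecidableEq m] {A : Matrix l m R} (B : Matrix m n R) {i : l} {j : m}
    (hA : A i = Pi.single j 1) : (A * B) i = B j := by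
  rw [mul_apply_eq_vecMul, hA, single_one_vecMul, row]

end Matrix

theorem stmt_1_general {m n r : ℕ}
    (H : Matrix (Fin m) (Fin n) ℝ)
    (P P' : Matrix (Fin m) (Fin r) ℝ)
    (S S' : Matrix (Fin r) (Fin n) ℝ)
    (hPS : H = P * S) (hPS' : H = P' * S')
    (hP : P.rank = r)
    (hS : S.rank = r)
    (hnat : ∀ i : Fin m, ∃ j : Fin r, P' i = Pi.single j 1) :
    ∃ B : Matrix (Fin r) (Fin r) ℝ,
      IsUnit B.det ∧
      P = P' * B ∧
      (∀ i : Fin m, ∃ k : Fin r, P i = B k) ∧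
      P * B⁻¹ = P' ∧
      (∀ i : Fin m, ∃ j : Fin r, (P * B⁻¹) i = Pi.single j 1) := by
  obtain ⟨T, hT⟩ :=
    Matrix.exists_mul_eq_one_of_rank_eq_card (hS.trans (Fintype.card_fin r).symm)
  have hPB : P = P' * (S' * T) := Matrix.eq_mul_mul_of_mul_eq_mul (hPS.symm.trans hPS') hT
  have hB : IsUnit (S' * T).det :=
    Matrix.isUnit_det_of_rank_mul_eq_card P' _ (hPB ▸ hP.trans (Fintype.card_fin r).symm)
  have hPinv : P * (S' * T)⁻¹ = P' := by
    rw [hPB, Matrix.mul_assoc, Matrix.mul_nonsing_inv _ hB, Matrix.mul_one]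
  refine ⟨S' * T, hB, hPB, fun i => ?_, hPinv, hPinv ▸ hnat⟩
  obtain ⟨j, hj⟩ := hnat i
  exact ⟨j, hPB ▸ Matrix.mul_row_eq_of_row_eq_single _ hj⟩

/-- If `H = P * S` is a rank factorization of a rank-`r` matrix, and
`H = P' * S'` is another rank factorization where every row of `P'` is a standard
basis vector of `ℝʳ`, then there is an invertible `B` with `P = P' * B`, every row of
`P` equals one of the rows of `B`, and `P * B⁻¹ = P'` has all rows standard basis
vectors. -/
theorem stmt_1 {m n r : ℕ}
    (H : Matrix (Fin m) (Fin n) ℝ)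
    (P P' : Matrix (Fin m) (Fin r) ℝ)
    (S S' : Matrix (Fin r) (Fin n) ℝ)
    (hPS : H = P * S) (hPS' : H = P' * S')
    (hP : P.rank = r) (hP' : P'.rank = r)
    (hS : S.rank = r) (hS' : S'.rank = r)
    (hnat : ∀ i : Fin m, ∃ j : Fin r, P' i = Pi.single j 1) :
    ∃ B : Matrix (Fin r) (Fin r) ℝ,
      IsUnit B.det ∧
      P = P' * B ∧
      (∀ i : Fin m, ∃ k : Fin r, P i = B k) ∧
      P * B⁻¹ = P' ∧
      (∀ i : Fin m, ∃ j : Fin r, (P * B⁻¹) i = Pi.single j 1) :=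
  stmt_1_general H P P' S S' hPS hPS' hP hS hnat
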